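/- Consider a one-dimensional periodic mesh of N ≥ 1 elements indexed by i ∈ ℤ/Nℤ, each with p+1 nodes (p ≥ 1). Let Q be a (p+1)×(p+1) real matrix with Q + Qᵀ = B (B the boundary matrix) and rows summing to zero. Let u_{i,j} ∈ ℝ^m be nodal states, w : ℝ^m → ℝ^m, ψ : ℝ^m → ℝ, let F be a symmetric two-point volume flux satisfying Tadmor's entropy-conservation condition, and let f* : ℝ^m × ℝ^m → ℝ^m be an interface flux that is also entropy-conservative, i.e. ⟨w(b) − w(a), f*(a,b)⟩ = ψ(b) − ψ(a) for all a, b. Define the nodal right-hand side r_{i,j} := s_{i,j} − ∑_k (2Q − B)_{jk} F(u_{i,j}, u_{i,k}), where s_{i,0} = f*(u_{i−1,p}, u_{i,0}), s_{i,p} = −f*(u_{i,p}, u_{i+1,0}), and s_{i,j} = 0 for 0 < j < p. Then the total entropy production vanishes: ∑_{i} ∑_{j} ⟨w(u_{i,j}), r_{i,j}⟩ = 0. -/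

import Mathlib

/-!
Write `D = 2Q - B`. The SBP property makes `D` skew-symmetric, and since the rows of `Q` sum
to zero the rows of `D` sum to `-B_jj`. Symmetrising the volume term of one element with the
symmetry of `F` and applying Tadmor's condition therefore collapses it to the entropy
potential at the element's endpoints, `ψ(u_{i,0}) - ψ(u_{i,p})`. Across each interface the
two interface-flux terms combine, by entropy conservation of `f*`, into the jump of `ψ`
there, and on a periodic mesh all of these boundary potentials telescope away.
-/

open Matrix

open Finset
open scoped RealInnerProductSpace

def boundaryMatrix (p : ℕ) : Matrix (Fin (p + 1)) (Fin (p + 1)) ℝ :=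
  Matrix.diagonal fun i => if i = 0 then (-1 : ℝ) else if i = Fin.last p then 1 else 0

section SBP

variable {ι : Type*} {Q B : Matrix ι ι ℝ}

theorem sbp_two_smul_sub_transpose (hSBP : Q + Qᵀ = B) :
    ((2 : ℝ) • Q - B)ᵀ = -((2 : ℝ) • Q - B) := by
  rw [← hSBP]
  simp only [transpose_sub, transpose_smul, transpose_add, transpose_transpose]
  module

theorem sbp_two_smul_sub_row_sum [Fintype ι] (hQ : ∀ j, ∑ k, Q j k = 0) (hB : B.IsDiag)
    (j : ι) : ∑ k, ((2 : ℝ) • Q - B) j k = -B j j := by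
  have hBrow : ∑ k, B j k = B j j :=
    Finset.sum_eq_single j (fun k _ hk => hB hk.symm) (by simp)
  simp [Finset.sum_sub_distrib, ← Finset.mul_sum, hQ, hBrow]

end SBP

variable {E : Type*} [NormedAddCommGroup E] [InnerProductSpace ℝ E]

theorem sum_inner_sum_smul_of_entropyConservative {ι α : Type*} [Fintype ι]
    (D : Matrix ι ι ℝ) (hD : Dᵀ = -D) (u : ι → α) (w : α → E) (ψ : α → ℝ) (F : α → α → E)
    (hFsym : ∀ a b, F a b = F b a) (hFEC : ∀ a b, ⟪w a - w b, F a b⟫ = ψ a - ψ b) :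
    ∑ j, ⟪w (u j), ∑ k, D j k • F (u j) (u k)⟫ = ∑ j, (∑ k, D j k) * ψ (u j) := by
  have hskew (j k : ι) : D k j = -D j k := by simpa using congrFun (congrFun hD j) k
  have hswap : ∑ j, ∑ k, D j k * ⟪w (u j), F (u j) (u k)⟫
      = -∑ j, ∑ k, D j k * ⟪w (u k), F (u j) (u k)⟫ := by
    rw [Finset.sum_comm]
    simp only [← Finset.sum_neg_distrib]
    refine Finset.sum_congr rfl fun j _ => Finset.sum_congr rfl fun k _ => ?_
    rw [hskew j k, hFsym]
    ring
  have hψswap : ∑ j, ∑ k, D j k * ψ (u k) = -∑ j, (∑ k, D j k) * ψ (u j) := by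
    rw [Finset.sum_comm]
    simp only [Finset.sum_mul, ← Finset.sum_neg_distrib]
    refine Finset.sum_congr rfl fun j _ => Finset.sum_congr rfl fun k _ => ?_
    rw [hskew j k]
    ring
  have htadmor : ∑ j, ∑ k, D j k * (ψ (u j) - ψ (u k))
      = ∑ j, ∑ k, D j k * ⟪w (u j), F (u j) (u k)⟫
        - ∑ j, ∑ k, D j k * ⟪w (u k), F (u j) (u k)⟫ := by
    simp only [← hFEC, inner_sub_left, mul_sub, Finset.sum_sub_distrib]
  simp only [mul_sub, Finset.sum_sub_distrib, ← Finset.sum_mul, hψswap, hswap] at htadmor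
  simp only [inner_sum, real_inner_smul_right]
  linarith

theorem sum_periodic_interface_entropy {G α : Type*} [AddGroupWithOne G] [Fintype G]
    (L R : G → α) (w : α → E) (ψ : α → ℝ) (fstar : α → α → E)
    (hEC : ∀ a b, ⟪w b - w a, fstar a b⟫ = ψ b - ψ a) :
    ∑ i, (⟪w (L i), fstar (R (i - 1)) (L i)⟫ - ⟪w (R i), fstar (R i) (L (i + 1))⟫
      - (ψ (L i) - ψ (R i))) = 0 := by
  have hshift (g : G → ℝ) : ∑ i, g (i - 1) = ∑ i, g i := (Equiv.subRight 1).sum_comp g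
  have hflux : ∑ i, ⟪w (R i), fstar (R i) (L (i + 1))⟫
      = ∑ i, ⟪w (R (i - 1)), fstar (R (i - 1)) (L i)⟫ := by
    simpa only [sub_add_cancel] using (hshift fun i => ⟪w (R i), fstar (R i) (L (i + 1))⟫).symm
  have hinterface : ∑ i, (⟪w (L i), fstar (R (i - 1)) (L i)⟫
      - ⟪w (R (i - 1)), fstar (R (i - 1)) (L i)⟫) = ∑ i, (ψ (L i) - ψ (R (i - 1))) :=
    Finset.sum_congr rfl fun i _ => by rw [← hEC, inner_sub_left]
  have hψ := hshift fun i => ψ (R i)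
  simp only [Finset.sum_sub_distrib] at hinterface ⊢
  linarith

theorem sum_inner_ite_zero_last {p : ℕ} (hp : p ≠ 0) (x : Fin (p + 1) → E) (a b : E) :
    ∑ j, ⟪x j, if j = 0 then a else if j = Fin.last p then b else 0⟫
      = ⟪x 0, a⟫ + ⟪x (Fin.last p), b⟫ := by
  have h : (0 : Fin (p + 1)) ≠ Fin.last p := by simpa [Fin.ext_iff] using hp.symm
  rw [Fintype.sum_eq_add 0 (Fin.last p) h]
  · simp [h.symm]
  · intro j hj
    simp [hj.1, hj.2]

theorem sum_boundaryMatrix_diag_mul {p : ℕ} (hp : p ≠ 0) (f : Fin (p + 1) → ℝ) :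
    ∑ j, boundaryMatrix p j j * f j = f (Fin.last p) - f 0 := by
  have h : (0 : Fin (p + 1)) ≠ Fin.last p := by simpa [Fin.ext_iff] using hp.symm
  rw [Fintype.sum_eq_add 0 (Fin.last p) h]
  · simp [boundaryMatrix, h.symm]
    ring
  · intro j hj
    simp [boundaryMatrix, hj.1, hj.2]

/-- On a periodic 1D mesh of `N` elements, the DG scheme with flux-differencing volume
terms built from an SBP operator `Q`, a symmetric entropy-conservative two-point volume
flux `F`, and an entropy-conservative interface flux `fstar` has vanishing total entropy
production. -/
theorem periodic_flux_differencing_entropy_conservation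
    (N p m : ℕ) [NeZero N] (hp : 1 ≤ p)
    (Q : Matrix (Fin (p + 1)) (Fin (p + 1)) ℝ)
    (hSBP : Q + Qᵀ = boundaryMatrix p) (hQ : ∀ j, ∑ k, Q j k = 0)
    (u : ZMod N → Fin (p + 1) → EuclideanSpace ℝ (Fin m))
    (w : EuclideanSpace ℝ (Fin m) → EuclideanSpace ℝ (Fin m))
    (ψ : EuclideanSpace ℝ (Fin m) → ℝ)
    (F : EuclideanSpace ℝ (Fin m) → EuclideanSpace ℝ (Fin m) → EuclideanSpace ℝ (Fin m))
    (fstar : EuclideanSpace ℝ (Fin m) → EuclideanSpace ℝ (Fin m) → EuclideanSpace ℝ (Fin m))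
    (hFsym : ∀ a b, F a b = F b a)
    (hFEC : ∀ a b, ⟪w a - w b, F a b⟫ = ψ a - ψ b)
    (hfstarEC : ∀ a b, ⟪w b - w a, fstar a b⟫ = ψ b - ψ a) :
    ∑ i : ZMod N, ∑ j : Fin (p + 1),
      ⟪w (u i j),
        (if j = 0 then fstar (u (i - 1) (Fin.last p)) (u i 0)
          else if j = Fin.last p then -fstar (u i (Fin.last p)) (u (i + 1) 0)
          else 0)
        - ∑ k, ((2 : ℝ) • Q - boundaryMatrix p) j k • F (u i j) (u i k)⟫ = 0 := by
  have hp0 : p ≠ 0 := by omega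
  have hB : (boundaryMatrix p).IsDiag := isDiag_diagonal _
  have helement (i : ZMod N) : ∑ j, ⟪w (u i j),
        (if j = 0 then fstar (u (i - 1) (Fin.last p)) (u i 0)
          else if j = Fin.last p then -fstar (u i (Fin.last p)) (u (i + 1) 0)
          else 0)
        - ∑ k, ((2 : ℝ) • Q - boundaryMatrix p) j k • F (u i j) (u i k)⟫
      = ⟪w (u i 0), fstar (u (i - 1) (Fin.last p)) (u i 0)⟫
        - ⟪w (u i (Fin.last p)), fstar (u i (Fin.last p)) (u (i + 1) 0)⟫
        - (ψ (u i 0) - ψ (u i (Fin.last p))) := by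
    rw [Finset.sum_congr rfl fun j _ => inner_sub_right _ _ _, Finset.sum_sub_distrib,
      sum_inner_ite_zero_last hp0,
      sum_inner_sum_smul_of_entropyConservative _ (sbp_two_smul_sub_transpose hSBP) (u i) w ψ F hFsym hFEC]
    simp only [sbp_two_smul_sub_row_sum hQ hB, neg_mul, Finset.sum_neg_distrib,
      sum_boundaryMatrix_diag_mul hp0, inner_neg_right]
    ring
  rw [Finset.sum_congr rfl fun i _ => helement i]
  exact sum_periodic_interface_entropy (u · 0) (u · (Fin.last p)) w ψ fstar hfstarEC
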